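/- Let H : ℝ → [0,∞) be an even convex function with H(0)=0 such that x ↦ H(x)/x² is non-decreasing on (0,∞), and let H* be its Legendre conjugate. Then for every x > 0: H*(x) ≥ H((H*)'_r(x)/2) ≥ (1/ω_H(2))·H((H*)'_r(x)), where (H*)'_r denotes the right derivative and ω_H(t) = sup_{s>0} H(ts)/H(s). -/

import Mathlib

open Real Set

/-!
Because `H(t)/t²` is nondecreasing, `H(λt) ≤ λ² H(t)` for `λ ∈ [0,1]`, and dually
`H*(y) ≤ (y/x)² H*(x)` for `0 < x ≤ y`. Comparing `H*` with this parabola at `x` bounds the right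
derivative: `(H*)'_r(x) ≤ 2 H*(x)/x`. The upper inequality then follows from the monotonicity of
`H` on `[0, ∞)` and `H(H*(x)/x) ≤ H*(x)`. The lower one is the doubling bound
`H(2s) ≤ ω_H(2) H(s)`; at points where `H(s) = 0` the quotient defining `ω_H` is junk, and there
the intermediate value theorem shows that `H(2s) = 0` as well.
-/

/-- The Legendre conjugate of `H`: `H*(y) = sup_{x ≥ 0} (x·|y| − H(x))`. -/
noncomputable def youngConj (H : ℝ → ℝ) (y : ℝ) : ℝ :=
  sSup ((fun x => x * |y| - H x) '' Set.Ici 0)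

/-- `ω_H(t) = sup_{s > 0} H(ts)/H(s)`. -/
noncomputable def omegaH (H : ℝ → ℝ) (t : ℝ) : ℝ :=
  ⨆ s : {s : ℝ // 0 < s}, H (t * s) / H s

def youngSet (H : ℝ → ℝ) (y : ℝ) : Set ℝ :=
  (fun t => t * |y| - H t) '' Ici 0

section

variable {H : ℝ → ℝ} {x y t : ℝ}

lemma youngConj_le {M : ℝ} (h : ∀ t, 0 ≤ t → t * |y| - H t ≤ M) : youngConj H y ≤ M :=
  csSup_le ⟨_, 0, self_mem_Ici, rfl⟩ (by rintro _ ⟨t, ht, rfl⟩; exact h t ht)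

lemma le_youngConj (hy : BddAbove (youngSet H y)) (ht : 0 ≤ t) :
    t * |y| - H t ≤ youngConj H y :=
  le_csSup hy ⟨t, ht, rfl⟩

lemma youngConj_of_not_bddAbove (hy : ¬BddAbove (youngSet H y)) : youngConj H y = 0 :=
  Real.sSup_of_not_bddAbove hy

lemma youngConj_nonneg (h0 : H 0 = 0) (y : ℝ) : 0 ≤ youngConj H y := by
  by_cases hy : BddAbove (youngSet H y)
  · simpa [h0] using le_youngConj hy le_rfl
  · rw [youngConj_of_not_bddAbove hy]

lemma BddAbove.youngSet_of_abs_le (hy : BddAbove (youngSet H y)) (hxy : |x| ≤ |y|) :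
    BddAbove (youngSet H x) := by
  obtain ⟨M, hM⟩ := hy
  refine ⟨M, ?_⟩
  rintro _ ⟨t, ht, rfl⟩
  exact (sub_le_sub_right (mul_le_mul_of_nonneg_left hxy ht) _).trans (hM ⟨t, ht, rfl⟩)

lemma apply_le_sq_mul_of_monotoneOn_div_sq (hmono : MonotoneOn (fun x => H x / x ^ 2) (Ioi 0))
    {a b : ℝ} (ha : 0 < a) (hab : a ≤ b) : H a ≤ (a / b) ^ 2 * H b := by
  have hb : 0 < b := ha.trans_le hab
  calc H a = a ^ 2 * (H a / a ^ 2) := by field_simp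
    _ ≤ a ^ 2 * (H b / b ^ 2) := mul_le_mul_of_nonneg_left (hmono ha hb hab) (sq_nonneg a)
    _ = (a / b) ^ 2 * H b := by ring

lemma monotoneOn_Ici_of_monotoneOn_div_sq (h0 : H 0 = 0) (hnonneg : ∀ x, 0 ≤ H x)
    (hmono : MonotoneOn (fun x => H x / x ^ 2) (Ioi 0)) : MonotoneOn H (Ici 0) := by
  intro a ha b hb hab
  rcases (mem_Ici.1 ha).eq_or_lt with rfl | ha
  · rw [h0]
    exact hnonneg b
  have hb : 0 < b := ha.trans_le hab
  calc H a ≤ (a / b) ^ 2 * H b := apply_le_sq_mul_of_monotoneOn_div_sq hmono ha hab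
    _ ≤ 1 * H b :=
        mul_le_mul_of_nonneg_right (pow_le_one₀ (by positivity) ((div_le_one hb).2 hab)) (hnonneg b)
    _ = H b := one_mul _

lemma sub_le_sq_mul_sub (h0 : H 0 = 0) (hmono : MonotoneOn (fun x => H x / x ^ 2) (Ioi 0))
    (hx : 0 < x) (hxy : x ≤ y) (ht : 0 ≤ t) :
    t * |y| - H t ≤ (y / x) ^ 2 * (x / y * t * |x| - H (x / y * t)) := by
  rcases ht.eq_or_lt with rfl | ht
  · simp [h0]
  have hy : 0 < y := hx.trans_le hxy
  have hscale : H (x / y * t) ≤ (x / y) ^ 2 * H t := by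
    have h := apply_le_sq_mul_of_monotoneOn_div_sq hmono (a := x / y * t) (b := t) (by positivity)
      (mul_le_of_le_one_left ht.le ((div_le_one hy).2 hxy))
    rwa [mul_div_assoc, div_self ht.ne', mul_one] at h
  rw [abs_of_pos hx, abs_of_pos hy]
  calc t * y - H t = (y / x) ^ 2 * (x / y * t * x - (x / y) ^ 2 * H t) := by
        field_simp
    _ ≤ (y / x) ^ 2 * (x / y * t * x - H (x / y * t)) := by gcongr

lemma BddAbove.youngSet_of_le (h0 : H 0 = 0) (hmono : MonotoneOn (fun x => H x / x ^ 2) (Ioi 0))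
    (hx : 0 < x) (hxy : x ≤ y) (hbdd : BddAbove (youngSet H x)) : BddAbove (youngSet H y) := by
  obtain ⟨M, hM⟩ := hbdd
  refine ⟨(y / x) ^ 2 * M, ?_⟩
  rintro _ ⟨t, ht, rfl⟩
  have hxt : 0 ≤ x / y * t := mul_nonneg (div_nonneg hx.le (hx.le.trans hxy)) ht
  exact (sub_le_sq_mul_sub h0 hmono hx hxy ht).trans
    (mul_le_mul_of_nonneg_left (hM ⟨_, hxt, rfl⟩) (sq_nonneg _))

lemma youngConj_le_sq_mul (h0 : H 0 = 0) (hmono : MonotoneOn (fun x => H x / x ^ 2) (Ioi 0))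
    (hx : 0 < x) (hxy : x ≤ y) : youngConj H y ≤ (y / x) ^ 2 * youngConj H x := by
  by_cases hbdd : BddAbove (youngSet H x)
  · refine youngConj_le fun t ht => (sub_le_sq_mul_sub h0 hmono hx hxy ht).trans ?_
    have hxt : 0 ≤ x / y * t := mul_nonneg (div_nonneg hx.le (hx.le.trans hxy)) ht
    exact mul_le_mul_of_nonneg_left (le_youngConj hbdd hxt) (sq_nonneg _)
  · have hbdd' : ¬BddAbove (youngSet H y) := fun hy =>
      hbdd (hy.youngSet_of_abs_le (abs_le_abs_of_nonneg hx.le hxy))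
    rw [youngConj_of_not_bddAbove hbdd, youngConj_of_not_bddAbove hbdd', mul_zero]

lemma youngConj_monotoneOn (h0 : H 0 = 0) (hmono : MonotoneOn (fun x => H x / x ^ 2) (Ioi 0)) :
    MonotoneOn (youngConj H) (Ioi 0) := by
  intro x hx y _ hxy
  by_cases hbdd : BddAbove (youngSet H x)
  · refine youngConj_le fun t ht => ?_
    have hxy' : |x| ≤ |y| := abs_le_abs_of_nonneg (le_of_lt hx) hxy
    exact (sub_le_sub_right (mul_le_mul_of_nonneg_left hxy' ht) _).trans
      (le_youngConj (hbdd.youngSet_of_le h0 hmono hx hxy) ht)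
  · rw [youngConj_of_not_bddAbove hbdd]
    exact youngConj_nonneg h0 y

lemma youngConj_le_mul_of_mul_le (hnonneg : ∀ x, 0 ≤ H x)
    (hmono : MonotoneOn (fun x => H x / x ^ 2) (Ioi 0)) {v : ℝ} (hx : 0 ≤ x) (hv : 0 < v)
    (hvH : v * x ≤ H v) : youngConj H x ≤ v * x := by
  refine youngConj_le fun t ht => ?_
  rw [abs_of_nonneg hx]
  rcases le_total t v with htv | hvt
  · nlinarith [hnonneg t]
  have htpos : 0 < t := hv.trans_le hvt
  have htH : t * x ≤ H t :=
    calc t * x = t / v * (v * x) := by field_simp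
      _ ≤ t / v * ((v / t) ^ 2 * H t) := mul_le_mul_of_nonneg_left
          (hvH.trans (apply_le_sq_mul_of_monotoneOn_div_sq hmono hv hvt)) (by positivity)
      _ = v / t * H t := by field_simp
      _ ≤ 1 * H t := mul_le_mul_of_nonneg_right ((div_le_one htpos).2 hvt) (hnonneg t)
      _ = H t := one_mul _
  nlinarith

lemma apply_youngConj_div_le (hcont : Continuous H) (hnonneg : ∀ x, 0 ≤ H x) (h0 : H 0 = 0)
    (hmono : MonotoneOn (fun x => H x / x ^ 2) (Ioi 0)) (hx : 0 < x) :
    H (youngConj H x / x) ≤ youngConj H x := by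
  set u := youngConj H x / x
  have hux : u * x = youngConj H x := div_mul_cancel₀ _ hx.ne'
  by_contra! hlt
  have hu : 0 < u := by
    refine (div_nonneg (youngConj_nonneg h0 x) hx.le).lt_of_ne fun hu => ?_
    rw [show u = 0 from hu.symm, h0] at hlt
    exact hlt.not_ge (youngConj_nonneg h0 x)
  -- `H > H*(x)` persists at some `v < u`, and then `H*(x) ≤ v x < u x = H*(x)`.
  obtain ⟨v, hvu, hv, hvH⟩ :=
    ((eventually_gt_nhds hu).and ((hcont.tendsto u).eventually (eventually_gt_nhds hlt))).exists_lt
  have hvx : v * x < u * x := mul_lt_mul_of_pos_right hvu hx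
  have := youngConj_le_mul_of_mul_le hnonneg hmono hx.le hv (by linarith)
  linarith

lemma derivWithin_Ici_le_of_le {f g : ℝ → ℝ} {g' : ℝ} (hfg : f x = g x)
    (hle : ∀ y, x < y → f y ≤ g y) (hf : DifferentiableWithinAt ℝ f (Ici x) x)
    (hg : HasDerivWithinAt g g' (Ici x) x) : derivWithin f (Ici x) x ≤ g' := by
  have hf' := hasDerivWithinAt_iff_tendsto_slope.mp hf.hasDerivWithinAt
  have hg' := hasDerivWithinAt_iff_tendsto_slope.mp hg
  rw [Ici_sdiff_left] at hf' hg'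
  refine le_of_tendsto_of_tendsto hf' hg' ?_
  filter_upwards [self_mem_nhdsWithin] with y (hy : x < y)
  rw [slope_def_field, slope_def_field, hfg]
  exact div_le_div_of_nonneg_right (sub_le_sub_right (hle y hy) _) (sub_nonneg.2 hy.le)

lemma derivWithin_youngConj_le (h0 : H 0 = 0) (hmono : MonotoneOn (fun x => H x / x ^ 2) (Ioi 0))
    (hx : 0 < x) : derivWithin (youngConj H) (Ici x) x ≤ 2 * (youngConj H x / x) := by
  by_cases hdiff : DifferentiableWithinAt ℝ (youngConj H) (Ici x) x
  · refine derivWithin_Ici_le_of_le (g := fun y => (y / x) ^ 2 * youngConj H x)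
      (by simp [hx.ne']) (fun y hy => youngConj_le_sq_mul h0 hmono hx hy.le) hdiff ?_
    exact ((((hasDerivAt_id' x).div_const x).fun_pow 2).mul_const _).hasDerivWithinAt.congr_deriv
      (by field_simp; ring)
  · rw [derivWithin_zero_of_not_differentiableWithinAt hdiff]
    have := youngConj_nonneg h0 x
    positivity

lemma apply_eq_zero_of_apply_half_eq_zero (hcont : Continuous H)
    (hmonoOn : MonotoneOn H (Ici 0))
    (hfin : BddAbove (Set.range fun s : {s : ℝ // 0 < s} => H (2 * s) / H s)) {D : ℝ}
    (hD : 0 < D) (hzero : H (D / 2) = 0) : H D = 0 := by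
  by_contra hne
  have hpos : 0 < H D :=
    (hzero ▸ hmonoOn (mem_Ici.2 (by positivity)) (mem_Ici.2 hD.le) (by linarith)).lt_of_ne'
      hne
  obtain ⟨M, hM⟩ := hfin
  -- Intermediate values `ε` of `H` on `[D/2, D]` make `H(2s)/H(s) ≥ H(D)/ε` arbitrarily large.
  set ε := H D / (|M| + 1)
  have hε : 0 < ε := by positivity
  have hεmem : ε ∈ Icc (H (D / 2)) (H D) :=
    ⟨hzero ▸ hε.le, div_le_self hpos.le (by linarith [abs_nonneg M])⟩
  obtain ⟨s, ⟨hs₁, hs₂⟩, hs⟩ := intermediate_value_Icc (by linarith) hcont.continuousOn hεmem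
  have hs0 : 0 < s := by linarith
  have h2s : H D ≤ H (2 * s) := hmonoOn (mem_Ici.2 hD.le) (mem_Ici.2 (by linarith)) (by linarith)
  have hMs : H (2 * s) / H s ≤ M := hM ⟨⟨s, hs0⟩, rfl⟩
  have : |M| + 1 ≤ M :=
    calc |M| + 1 = H D / ε := by simp only [ε]; field_simp
      _ ≤ H (2 * s) / ε := by gcongr
      _ ≤ M := hs ▸ hMs
  linarith [le_abs_self M]

lemma apply_le_omegaH_two_mul (h0 : H 0 = 0) (hnonneg : ∀ x, 0 ≤ H x) (hcont : Continuous H)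
    (hmonoOn : MonotoneOn H (Ici 0))
    (hfin : BddAbove (Set.range fun s : {s : ℝ // 0 < s} => H (2 * s) / H s)) {D : ℝ}
    (hD : 0 ≤ D) : H D ≤ omegaH H 2 * H (D / 2) := by
  rcases hD.eq_or_lt with rfl | hD
  · simp [h0]
  rcases (hnonneg (D / 2)).eq_or_lt with hzero | hpos
  · rw [apply_eq_zero_of_apply_half_eq_zero hcont hmonoOn hfin hD hzero.symm, ← hzero, mul_zero]
  · have h : H (2 * (D / 2)) / H (D / 2) ≤ omegaH H 2 := le_ciSup hfin ⟨D / 2, by positivity⟩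
    rw [mul_div_cancel₀ D two_ne_zero] at h
    exact (div_le_iff₀ hpos).1 h

end

theorem stmt6_general (H : ℝ → ℝ)
    (hconv : ConvexOn ℝ Set.univ H)
    (hnonneg : ∀ x, 0 ≤ H x)
    (h0 : H 0 = 0)
    (hmono : MonotoneOn (fun x => H x / x ^ 2) (Set.Ioi 0))
    (hfin : BddAbove (Set.range fun s : {s : ℝ // 0 < s} => H (2 * s) / H s)) :
    ∀ x > (0:ℝ),
      (1 / omegaH H 2) * H (derivWithin (youngConj H) (Set.Ici x) x)
          ≤ H (derivWithin (youngConj H) (Set.Ici x) x / 2) ∧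
      H (derivWithin (youngConj H) (Set.Ici x) x / 2) ≤ youngConj H x := by
  intro x hx
  have hcont : Continuous H := continuousOn_univ.mp (hconv.continuousOn isOpen_univ)
  have hmonoOn := monotoneOn_Ici_of_monotoneOn_div_sq h0 hnonneg hmono
  set D := derivWithin (youngConj H) (Ici x) x
  have hD : 0 ≤ D :=
    ((youngConj_monotoneOn h0 hmono).mono (Ici_subset_Ioi.2 hx)).derivWithin_nonneg
  have hDle : D / 2 ≤ youngConj H x / x := by linarith [derivWithin_youngConj_le h0 hmono hx]
  constructor
  · rcases le_or_gt (omegaH H 2) 0 with hω | hω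
    · exact (mul_nonpos_of_nonpos_of_nonneg (one_div_nonpos.2 hω) (hnonneg D)).trans (hnonneg _)
    · rw [one_div, inv_mul_le_iff₀ hω]
      exact apply_le_omegaH_two_mul h0 hnonneg hcont hmonoOn hfin hD
  · calc H (D / 2) ≤ H (youngConj H x / x) :=
          hmonoOn (mem_Ici.2 (by positivity)) (mem_Ici.2 (by linarith)) hDle
      _ ≤ youngConj H x := apply_youngConj_div_le hcont hnonneg h0 hmono hx

/-- For an even convex `H ≥ 0` with `H(0)=0` and `H(x)/x²` non-decreasing on
`(0,∞)`, for every `x > 0`: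
`H*(x) ≥ H((H*)'_r(x)/2) ≥ (1/ω_H(2))·H((H*)'_r(x))`, where `(H*)'_r` is the right
derivative of the Legendre conjugate. -/
theorem stmt6 (H : ℝ → ℝ)
    (heven : ∀ x, H (-x) = H x)
    (hconv : ConvexOn ℝ Set.univ H)
    (hnonneg : ∀ x, 0 ≤ H x)
    (h0 : H 0 = 0)
    (hmono : MonotoneOn (fun x => H x / x ^ 2) (Set.Ioi 0))
    (hfin : BddAbove (Set.range fun s : {s : ℝ // 0 < s} => H (2 * s) / H s)) :
    ∀ x > (0:ℝ),
      (1 / omegaH H 2) * H (derivWithin (youngConj H) (Set.Ici x) x)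
          ≤ H (derivWithin (youngConj H) (Set.Ici x) x / 2) ∧
      H (derivWithin (youngConj H) (Set.Ici x) x / 2) ≤ youngConj H x :=
  stmt6_general H hconv hnonneg h0 hmono hfin
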